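/- For x_p, x_q ∈ ℝ^{2n}, the residual x_p − μ*(θ) with μ*(θ) = φ_p x_p + φ_q x_q, φ_p = I_{2n} − (σ_p²/(σ_p²+σ_q²))Q, φ_q = (σ_p²/(σ_p²+σ_q²)) Q R(θ)ᵀ, satisfies ‖x_p − μ*(θ)‖² = (σ_p²/(σ_p²+σ_q²))² · ‖x_q − R(θ)x_p‖²_Q, where ‖z‖²_Q = zᵀQz. -/

import Mathlib

/-!
Since `μ*(θ) = x_p - c Q (x_p - Rᵀ x_q)` with `c = σ_p²/(σ_p²+σ_q²)`, the residual is `c Q v` for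
`v = x_p - Rᵀ x_q`, while `x_q - R x_p = -R v`. As `Q` is a symmetric idempotent,
`‖Q v‖² = vᵀ Q v`; as `R` is orthogonal and commutes with `Q = (I - e (eᵀe)⁻¹ eᵀ) ⊗ I₂`,
`(R v)ᵀ Q (R v) = vᵀ Q v`.
-/

open Matrix Real Kronecker

noncomputable def rot (θ : ℝ) : Matrix (Fin 2) (Fin 2) ℝ :=
  !![Real.cos θ, -Real.sin θ; Real.sin θ, Real.cos θ]

noncomputable def Fmat (n : ℕ) : Matrix (Fin n × Fin 2) (Fin 1 × Fin 2) ℝ :=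
  (Matrix.of fun (_ : Fin n) (_ : Fin 1) => (1 : ℝ)) ⊗ₖ (1 : Matrix (Fin 2) (Fin 2) ℝ)

noncomputable def Qmat (n : ℕ) : Matrix (Fin n × Fin 2) (Fin n × Fin 2) ℝ :=
  1 - Fmat n * ((Fmat n)ᵀ * Fmat n)⁻¹ * (Fmat n)ᵀ

noncomputable def Rblk (m : ℕ) (θ : ℝ) : Matrix (Fin m × Fin 2) (Fin m × Fin 2) ℝ :=
  (1 : Matrix (Fin m) (Fin m) ℝ) ⊗ₖ rot θ

noncomputable def sqn {ι : Type*} [Fintype ι] (z : ι → ℝ) : ℝ := z ⬝ᵥ z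

namespace Matrix

variable {α : Type*} [CommRing α] {ι m k p : Type*}

section ColSpaceProj

variable [Fintype m] [Fintype k] [DecidableEq k]

/-- When `FᵀF` is singular this is `0`, by the junk value of the inverse. -/
noncomputable def colSpaceProj (F : Matrix m k α) : Matrix m m α :=
  F * (Fᵀ * F)⁻¹ * Fᵀ

theorem isSymm_colSpaceProj (F : Matrix m k α) : (colSpaceProj F).IsSymm := by
  simp only [IsSymm, colSpaceProj, transpose_mul, transpose_transpose, transpose_nonsing_inv,
    Matrix.mul_assoc]

theorem isIdempotentElem_colSpaceProj (F : Matrix m k α) : IsIdempotentElem (colSpaceProj F) := by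
  by_cases h : IsUnit (Fᵀ * F).det
  · calc colSpaceProj F * colSpaceProj F
        = F * ((Fᵀ * F)⁻¹ * (Fᵀ * F)) * (Fᵀ * F)⁻¹ * Fᵀ := by
          simp only [colSpaceProj, Matrix.mul_assoc]
      _ = colSpaceProj F := by rw [nonsing_inv_mul _ h, Matrix.mul_one, colSpaceProj]
  · simp [IsIdempotentElem, colSpaceProj, nonsing_inv_apply_not_isUnit _ h]

theorem colSpaceProj_kronecker_one [Fintype p] [DecidableEq p] (A : Matrix m k α) :
    colSpaceProj (A ⊗ₖ (1 : Matrix p p α)) = colSpaceProj A ⊗ₖ 1 := by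
  simp only [colSpaceProj, ← kroneckerMap_transpose, transpose_one, ← mul_kronecker_mul,
    inv_kronecker, inv_one, Matrix.mul_one]

end ColSpaceProj

theorem commute_kronecker_one_one_kronecker [Fintype m] [Fintype p] [DecidableEq m]
    [DecidableEq p] (A : Matrix m m α) (B : Matrix p p α) : Commute (A ⊗ₖ 1) (1 ⊗ₖ B) := by
  simp only [Commute, SemiconjBy, ← mul_kronecker_mul, Matrix.mul_one, Matrix.one_mul]

section QuadraticForm

variable [Fintype ι]

theorem mulVec_dotProduct (A : Matrix ι ι α) (v w : ι → α) : A *ᵥ v ⬝ᵥ w = v ⬝ᵥ Aᵀ *ᵥ w := by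
  rw [dotProduct_mulVec, vecMul_transpose, dotProduct_comm]

theorem dotProduct_self_mulVec_of_isSymm_of_isIdempotentElem {Q : Matrix ι ι α} (hQ : Q.IsSymm)
    (hQQ : IsIdempotentElem Q) (v : ι → α) : Q *ᵥ v ⬝ᵥ Q *ᵥ v = v ⬝ᵥ Q *ᵥ v := by
  rw [mulVec_dotProduct, mulVec_mulVec, hQ.eq, hQQ.eq]

variable [DecidableEq ι]

theorem mulVec_dotProduct_mulVec_mulVec_of_commute {Q R : Matrix ι ι α} (hR : Rᵀ * R = 1)
    (hQR : Commute Q R) (v : ι → α) : R *ᵥ v ⬝ᵥ Q *ᵥ R *ᵥ v = v ⬝ᵥ Q *ᵥ v := by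
  rw [mulVec_dotProduct, mulVec_mulVec, mulVec_mulVec, Matrix.mul_assoc, hQR.eq,
    ← Matrix.mul_assoc, hR, Matrix.one_mul]

theorem sub_residual_eq_smul_mulVec (Q R : Matrix ι ι α) (c : α) (xp xq : ι → α) :
    xp - ((1 - c • Q) *ᵥ xp + (c • (Q * Rᵀ)) *ᵥ xq) = c • Q *ᵥ (xp - Rᵀ *ᵥ xq) := by
  rw [sub_mulVec, one_mulVec, smul_mulVec, smul_mulVec, ← mulVec_mulVec, mulVec_sub, smul_sub]
  abel

theorem sub_mulVec_eq_neg_mulVec {R : Matrix ι ι α} (hR : Rᵀ * R = 1) (xp xq : ι → α) :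
    xq - R *ᵥ xp = -(R *ᵥ (xp - Rᵀ *ᵥ xq)) := by
  rw [mulVec_sub, mulVec_mulVec, mul_eq_one_comm.mp hR, one_mulVec, neg_sub]

theorem dotProduct_self_residual {Q R : Matrix ι ι α} (hQ : Q.IsSymm) (hQQ : IsIdempotentElem Q)
    (hR : Rᵀ * R = 1) (hQR : Commute Q R) (c : α) (xp xq : ι → α) :
    let r := xp - ((1 - c • Q) *ᵥ xp + (c • (Q * Rᵀ)) *ᵥ xq)
    r ⬝ᵥ r = c ^ 2 * ((xq - R *ᵥ xp) ⬝ᵥ Q *ᵥ (xq - R *ᵥ xp)) := by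
  intro r
  rw [show r = _ from sub_residual_eq_smul_mulVec Q R c xp xq, sub_mulVec_eq_neg_mulVec hR,
    mulVec_neg, neg_dotProduct, dotProduct_neg, neg_neg,
    mulVec_dotProduct_mulVec_mulVec_of_commute hR hQR, smul_dotProduct, dotProduct_smul,
    dotProduct_self_mulVec_of_isSymm_of_isIdempotentElem hQ hQQ, smul_eq_mul, smul_eq_mul, sq,
    mul_assoc]

end QuadraticForm

end Matrix

theorem rot_transpose_mul_self (θ : ℝ) : (rot θ)ᵀ * rot θ = 1 := by
  ext i j
  fin_cases i <;> fin_cases j <;>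
    simp [rot, Matrix.mul_apply, Fin.sum_univ_two] <;> nlinarith [sin_sq_add_cos_sq θ]

theorem Rblk_transpose_mul_self (m : ℕ) (θ : ℝ) : (Rblk m θ)ᵀ * Rblk m θ = 1 := by
  rw [Rblk, ← kroneckerMap_transpose, transpose_one, ← mul_kronecker_mul, Matrix.one_mul,
    rot_transpose_mul_self, one_kronecker_one]

theorem Qmat_eq_one_sub_colSpaceProj (n : ℕ) : Qmat n = 1 - colSpaceProj (Fmat n) := rfl

theorem isSymm_Qmat (n : ℕ) : (Qmat n).IsSymm :=
  isSymm_one.sub (isSymm_colSpaceProj _)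

theorem isIdempotentElem_Qmat (n : ℕ) : IsIdempotentElem (Qmat n) :=
  (isIdempotentElem_colSpaceProj _).one_sub

theorem commute_Qmat_Rblk (n : ℕ) (θ : ℝ) : Commute (Qmat n) (Rblk n θ) := by
  rw [Qmat_eq_one_sub_colSpaceProj, Fmat, colSpaceProj_kronecker_one]
  exact (Commute.one_left _).sub_left (commute_kronecker_one_one_kronecker _ _)

theorem residual_norm_general (n : ℕ) (θ : ℝ) (σp σq : ℝ)
    (xp xq : Fin n × Fin 2 → ℝ) :
    let c : ℝ := σp ^ 2 / (σp ^ 2 + σq ^ 2)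
    let φp : Matrix (Fin n × Fin 2) (Fin n × Fin 2) ℝ := 1 - c • Qmat n
    let φq : Matrix (Fin n × Fin 2) (Fin n × Fin 2) ℝ := c • (Qmat n * (Rblk n θ)ᵀ)
    let μstar : Fin n × Fin 2 → ℝ := φp.mulVec xp + φq.mulVec xq
    sqn (xp - μstar)
      = c ^ 2 * ((xq - (Rblk n θ).mulVec xp) ⬝ᵥ (Qmat n).mulVec (xq - (Rblk n θ).mulVec xp)) :=
  dotProduct_self_residual (isSymm_Qmat n) (isIdempotentElem_Qmat n)
    (Rblk_transpose_mul_self n θ) (commute_Qmat_Rblk n θ) _ xp xq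

theorem residual_norm (n : ℕ) (hn : 1 ≤ n) (θ : ℝ) (σp σq : ℝ) (hp : 0 < σp) (hq : 0 < σq)
    (xp xq : Fin n × Fin 2 → ℝ) :
    let c : ℝ := σp ^ 2 / (σp ^ 2 + σq ^ 2)
    let φp : Matrix (Fin n × Fin 2) (Fin n × Fin 2) ℝ := 1 - c • Qmat n
    let φq : Matrix (Fin n × Fin 2) (Fin n × Fin 2) ℝ := c • (Qmat n * (Rblk n θ)ᵀ)
    let μstar : Fin n × Fin 2 → ℝ := φp.mulVec xp + φq.mulVec xq
    sqn (xp - μstar)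
      = c ^ 2 * ((xq - (Rblk n θ).mulVec xp) ⬝ᵥ (Qmat n).mulVec (xq - (Rblk n θ).mulVec xp)) :=
  residual_norm_general n θ σp σq xp xq
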